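/- Let F be a totally tame {*}-formula of dimension k and input dimension p, and let E be a totally tame {*}-formula of dimension 1 and input dimension at most p. If the last order of the tensor computed by F equals the order of the vector computed by E (so F * E is well defined), then there exists a totally tame {*}-formula G_r of size |F| + |E| + 1 computing the same tensor as F * E; similarly, if the order of the vector computed by E equals the first order of the tensor computed by F (so E * F is well defined), then there exists a totally tame {*}-formula G_l of size |F| + |E| + 1 computing the same tensor as E * F. -/

import Mathlib

namespace TC

/-- An entry of an input tensor: an element of `K` or a variable. -/
inductive Entry (K : Type) where
  | const : K → Entry K
  | var : ℕ → Entry K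

noncomputable def Entry.toPoly {K : Type} [CommSemiring K] : Entry K → MvPolynomial ℕ K
  | .const c => MvPolynomial.C c
  | .var n => MvPolynomial.X n

/-- The index set of a tensor of order `ns`. -/
def Idx : List ℕ → Type
  | [] => PUnit
  | n :: ns => Fin n × Idx ns

def Idx.cast {xs ys : List ℕ} (h : xs = ys) (e : Idx xs) : Idx ys := h ▸ e

def Idx.app : (xs : List ℕ) → {ys : List ℕ} → Idx xs → Idx ys → Idx (xs ++ ys)
  | [], _, _, f => f
  | _ :: xs, _, e, f => (e.1, Idx.app xs e.2 f)

def Idx.split : (xs : List ℕ) → {ys : List ℕ} → Idx (xs ++ ys) → Idx xs × Idx ys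
  | [], _, e => (PUnit.unit, e)
  | _ :: xs, _, e => ((e.1, (Idx.split xs e.2).1), (Idx.split xs e.2).2)

/-- A tensor over `R`: an order `(n_1, …, n_k)` together with an entry map. -/
structure Tens (R : Type) where
  order : List ℕ
  entry : Idx order → R

/-- Number of entries of a tensor. -/
def Tens.tsize {R} (T : Tens R) : ℕ := T.order.prod

/-- Dimension of a tensor. -/
def Tens.dim {R} (T : Tens R) : ℕ := T.order.length

/-- Maximal order of a tensor. -/
def Tens.maxOrder {R} (T : Tens R) : ℕ := T.order.foldr max 0

/-- `T` and `G` can be contracted: last order of `T` equals first order of `G`. -/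
def Tens.Compatible {R} (T G : Tens R) : Prop :=
  T.order ≠ [] ∧ G.order ≠ [] ∧ T.order.getLast? = G.order.head?

/-- Contraction `T * G` on the last dimension of `T` and the first dimension of `G`
(returning a junk scalar tensor when the orders are incompatible). -/
def Tens.contr {R : Type} [CommSemiring R] (T G : Tens R) : Tens R :=
  match hT : T.order.getLast?, hG : G.order with
  | some c, c' :: ms =>
      if hc : c' = c then
        { order := T.order.dropLast ++ ms
          entry := fun e =>
            let p := Idx.split T.order.dropLast e
            ∑ i : Fin c,
              T.entry (Idx.cast
                (show T.order.dropLast ++ [c] = T.order by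
                  have hne : T.order ≠ [] := by
                    intro h; rw [h] at hT; simp at hT
                  have : T.order.getLast hne = c := by
                    have := List.getLast?_eq_some_getLast hne
                    rw [this] at hT
                    exact (Option.some.injEq _ _).mp hT
                  rw [← this]
                  exact List.dropLast_append_getLast hne)
                (Idx.app T.order.dropLast p.1 ((i, PUnit.unit) : Idx [c]))) *
              G.entry (Idx.cast
                (show c :: ms = G.order by rw [hG, hc])
                ((i, p.2) : Idx (c :: ms))) }
      else ⟨[], fun _ => 0⟩
  | _, _ => ⟨[], fun _ => 0⟩

end TC

namespace TC

/-- Insert a coordinate value at position `i`, recovering an index for order `l`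
from an index for `l.eraseIdx i`. -/
def Idx.insertAt : (l : List ℕ) → (i : Fin l.length) → Fin (l.get i) →
    Idx (l.eraseIdx i.val) → Idx l
  | _ :: _, ⟨0, _⟩, r, e => (r, e)
  | _ :: l, ⟨i + 1, h⟩, r, e =>
      (e.1, Idx.insertAt l ⟨i, by simpa using Nat.lt_of_succ_lt_succ h⟩ r e.2)

/-- The contraction `T *_{i,j} G` on dimension `i` of `T` and dimension `j` of `G`
(0-based; returns a junk scalar tensor when incompatible). -/
noncomputable def Tens.contrIJ {R : Type} [CommSemiring R] (T G : Tens R) (i j : ℕ) : Tens R :=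
  if h : ∃ (hi : i < T.order.length) (hj : j < G.order.length),
      T.order.get ⟨i, hi⟩ = G.order.get ⟨j, hj⟩ then
    { order := T.order.eraseIdx i ++ G.order.eraseIdx j
      entry := fun e =>
        let hi := h.choose
        let hj := h.choose_spec.choose
        let hc := h.choose_spec.choose_spec
        let p := Idx.split (T.order.eraseIdx i) e
        ∑ r : Fin (T.order.get ⟨i, hi⟩),
          T.entry (Idx.insertAt T.order ⟨i, hi⟩ r p.1) *
          G.entry (Idx.insertAt G.order ⟨j, hj⟩ (Fin.cast hc r) p.2) }
  else ⟨[], fun _ => 0⟩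

/-- `{*}`-formulas: leaves are input tensors with entries in `K` or variables,
internal nodes are contractions `*`. -/
inductive SForm (K : Type) where
  | input : Tens (Entry K) → SForm K
  | contr : SForm K → SForm K → SForm K

variable {K : Type} [Field K]

/-- The tensor computed by a `{*}`-formula. -/
noncomputable def SForm.eval : SForm K → Tens (MvPolynomial ℕ K)
  | .input T => ⟨T.order, fun e => (T.entry e).toPoly⟩
  | .contr F G => (F.eval).contr G.eval

/-- Well-formedness: at every `*`-node the orders match. -/
def SForm.WF : SForm K → Prop
  | .input _ => True
  | .contr F G => F.WF ∧ G.WF ∧ F.eval.Compatible G.eval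

/-- Size of a `{*}`-formula: number of `*`-nodes plus sizes of the input tensors. -/
def SForm.size : SForm K → ℕ
  | .input T => T.tsize
  | .contr F G => F.size + G.size + 1

/-- Dimension of the tensor computed by the formula. -/
noncomputable def SForm.dim (F : SForm K) : ℕ := F.eval.dim

/-- Maximal dimension over all nodes of the formula. -/
noncomputable def SForm.maxdim : SForm K → ℕ
  | .input T => T.dim
  | .contr F G => max ((F.eval.contr G.eval).dim) (max F.maxdim G.maxdim)

/-- Input dimension: maximal dimension of an input tensor. -/
def SForm.inputDim : SForm K → ℕ
  | .input T => T.dim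
  | .contr F G => max F.inputDim G.inputDim

/-- Maximum of the maximal orders of the input tensors. -/
def SForm.inputMaxOrder : SForm K → ℕ
  | .input T => T.maxOrder
  | .contr F G => max F.inputMaxOrder G.inputMaxOrder

/-- All input tensors have dimension at least 2. -/
def SForm.InputsDimGE2 : SForm K → Prop
  | .input T => 2 ≤ T.dim
  | .contr F G => F.InputsDimGE2 ∧ G.InputsDimGE2

/-- A formula of dimension `k` and input dimension `p` is tame if
`maxdim ≤ max k p`. -/
noncomputable def SForm.Tame (F : SForm K) : Prop := F.maxdim ≤ max F.dim F.inputDim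

/-- Every subformula is tame. -/
noncomputable def SForm.TotallyTame : SForm K → Prop
  | .input T => (SForm.input T : SForm K).Tame
  | .contr F G => (SForm.contr F G).Tame ∧ F.TotallyTame ∧ G.TotallyTame

/-- The tensor computed by `F` has a single entry, equal to the polynomial `f`. -/
noncomputable def SForm.ComputesPoly (F : SForm K) (f : MvPolynomial ℕ K) : Prop :=
  F.eval.tsize = 1 ∧ ∀ e, F.eval.entry e = f

/-- `{*_{i,j}}`-formulas: internal nodes carry the pair of contracted dimensions
(0-based). -/
inductive IForm (K : Type) where
  | input : Tens (Entry K) → IForm K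
  | contr : ℕ → ℕ → IForm K → IForm K → IForm K

noncomputable def IForm.eval : IForm K → Tens (MvPolynomial ℕ K)
  | .input T => ⟨T.order, fun e => (T.entry e).toPoly⟩
  | .contr i j F G => (F.eval).contrIJ G.eval i j

def IForm.WF : IForm K → Prop
  | .input _ => True
  | .contr i j F G => F.WF ∧ G.WF ∧
      ∃ (hi : i < F.eval.order.length) (hj : j < G.eval.order.length),
        F.eval.order.get ⟨i, hi⟩ = G.eval.order.get ⟨j, hj⟩

def IForm.size : IForm K → ℕ
  | .input T => T.tsize
  | .contr _ _ F G => F.size + G.size + 1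

noncomputable def IForm.dim (F : IForm K) : ℕ := F.eval.dim

noncomputable def IForm.maxdim : IForm K → ℕ
  | .input T => T.dim
  | .contr i j F G => max ((F.eval.contrIJ G.eval i j).dim) (max F.maxdim G.maxdim)

def IForm.inputDim : IForm K → ℕ
  | .input T => T.dim
  | .contr _ _ F G => max F.inputDim G.inputDim

noncomputable def IForm.Tame (F : IForm K) : Prop := F.maxdim ≤ max F.dim F.inputDim

noncomputable def IForm.TotallyTame : IForm K → Prop
  | .input T => (IForm.input T : IForm K).Tame
  | .contr i j F G => (IForm.contr i j F G).Tame ∧ F.TotallyTame ∧ G.TotallyTame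

noncomputable def IForm.ComputesPoly (F : IForm K) (f : MvPolynomial ℕ K) : Prop :=
  F.eval.tsize = 1 ∧ ∀ e, F.eval.entry e = f

end TC

namespace TC

/-- A gate of an arithmetic circuit: an input (constant or variable) or a
computation gate with the indices of its two children. -/
inductive Gate (K : Type) where
  | const : K → Gate K
  | var : ℕ → Gate K
  | add : ℕ → ℕ → Gate K
  | mul : ℕ → ℕ → Gate K

def Gate.children {K} : Gate K → List ℕ
  | .add j k => [j, k]
  | .mul j k => [j, k]
  | _ => []

def Gate.IsInput {K} : Gate K → Prop
  | .const _ => True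
  | .var _ => True
  | _ => False

/-- An arithmetic circuit: a DAG of gates (children point to smaller indices,
which is equivalent to acyclicity) with a distinguished output gate. -/
structure Circuit (K : Type) where
  size : ℕ
  gate : Fin size → Gate K
  output : Fin size
  wf : ∀ i : Fin size, ∀ j ∈ (gate i).children, j < i.val

/-- The polynomial computed by a gate of the circuit. -/
noncomputable def Circuit.eval {K : Type} [Field K] (C : Circuit K) :
    Fin C.size → MvPolynomial ℕ K
  | i =>
    match h : C.gate i with
    | .const c => MvPolynomial.C c
    | .var n => MvPolynomial.X n
    | .add j k =>
        have hj : j < i.val := C.wf i j (by rw [h]; simp [Gate.children])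
        have hk : k < i.val := C.wf i k (by rw [h]; simp [Gate.children])
        C.eval ⟨j, hj.trans i.isLt⟩ + C.eval ⟨k, hk.trans i.isLt⟩
    | .mul j k =>
        have hj : j < i.val := C.wf i j (by rw [h]; simp [Gate.children])
        have hk : k < i.val := C.wf i k (by rw [h]; simp [Gate.children])
        C.eval ⟨j, hj.trans i.isLt⟩ * C.eval ⟨k, hk.trans i.isLt⟩
  termination_by i => i.val

/-- The circuit computes `f` if its output gate computes `f`. -/
noncomputable def Circuit.Computes {K : Type} [Field K] (C : Circuit K)
    (f : MvPolynomial ℕ K) : Prop :=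
  C.eval C.output = f

/-- `a` is a child of `b`. -/
def Circuit.Child {K} (C : Circuit K) (a b : Fin C.size) : Prop :=
  a.val ∈ (C.gate b).children

/-- The set of gates of the subcircuit rooted at `i`. -/
def Circuit.Subgates {K} (C : Circuit K) (i : Fin C.size) : Set (Fin C.size) :=
  {j | Relation.ReflTransGen C.Child j i}

/-- Multiplicatively disjoint: the subcircuits rooted at the two children of any
`×`-gate are disjoint. -/
def Circuit.MultDisjoint {K} (C : Circuit K) : Prop :=
  ∀ i : Fin C.size, ∀ j k : ℕ, C.gate i = .mul j k →
    ∀ (hj : j < C.size) (hk : k < C.size),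
      Disjoint (C.Subgates ⟨j, hj⟩) (C.Subgates ⟨k, hk⟩)

/-- Skew: every `×`-gate has at least one child which is an input gate. -/
def Circuit.Skew {K} (C : Circuit K) : Prop :=
  ∀ i : Fin C.size, ∀ j k : ℕ, C.gate i = .mul j k →
    ∀ (hj : j < C.size) (hk : k < C.size),
      (C.gate ⟨j, hj⟩).IsInput ∨ (C.gate ⟨k, hk⟩).IsInput

/-- The class VP: families of polynomials computed by polynomial-size
multiplicatively disjoint circuits. -/
noncomputable def VP {K : Type} [Field K] (f : ℕ → MvPolynomial ℕ K) : Prop :=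
  ∃ (C : ℕ → Circuit K) (P : Polynomial ℕ),
    ∀ n, (C n).MultDisjoint ∧ (C n).Computes (f n) ∧ (C n).size ≤ P.eval n

/-- Parse trees, recording at each node the index of the corresponding gate. -/
inductive ParseT where
  | leaf : ℕ → ParseT
  | plus : ℕ → ParseT → ParseT
  | times : ℕ → ParseT → ParseT → ParseT

/-- Ordered rooted trees (shapes of parse trees); two parse trees are isomorphic
as ordered rooted trees iff they have the same shape. -/
inductive Shape where
  | lf : Shape
  | un : Shape → Shape
  | bin : Shape → Shape → Shape

def ParseT.shape : ParseT → Shape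
  | .leaf _ => .lf
  | .plus _ t => .un t.shape
  | .times _ l r => .bin l.shape r.shape

/-- Number of vertices of a tree. -/
def Shape.size : Shape → ℕ
  | .lf => 1
  | .un t => t.size + 1
  | .bin l r => l.size + r.size + 1

/-- `C.ParseFrom i t`: `t` is a parse tree of the subcircuit of `C` rooted at gate `i`. -/
inductive Circuit.ParseFrom {K} (C : Circuit K) : Fin C.size → ParseT → Prop where
  | leaf (i : Fin C.size) (h : (C.gate i).IsInput) : C.ParseFrom i (.leaf i.val)
  | plusL (i : Fin C.size) (j k : ℕ) (h : C.gate i = .add j k) (hj : j < C.size)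
      (t : ParseT) (ht : C.ParseFrom ⟨j, hj⟩ t) : C.ParseFrom i (.plus i.val t)
  | plusR (i : Fin C.size) (j k : ℕ) (h : C.gate i = .add j k) (hk : k < C.size)
      (t : ParseT) (ht : C.ParseFrom ⟨k, hk⟩ t) : C.ParseFrom i (.plus i.val t)
  | times (i : Fin C.size) (j k : ℕ) (h : C.gate i = .mul j k)
      (hj : j < C.size) (hk : k < C.size) (tl tr : ParseT)
      (hl : C.ParseFrom ⟨j, hj⟩ tl) (hr : C.ParseFrom ⟨k, hk⟩ tr) :
      C.ParseFrom i (.times i.val tl tr)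

/-- `t` is a parse tree of the circuit `C`. -/
def Circuit.IsParseTree {K} (C : Circuit K) (t : ParseT) : Prop :=
  C.ParseFrom C.output t

end TC

/-! If `maxdim F ≤ max (dim F - 1) (inputDim F)`, the formula `F * E` is itself totally tame.
Otherwise tameness of `F` forces `maxdim F = dim F > inputDim F`; then `F` is not an input,
so `F = A * B` with `maxdim A, maxdim B ≤ dim F = dim A + dim B - 2`, i.e. `dim A, dim B ≥ 2`.
Hence `F * E ≃ A * (B * E)`, and by induction `B * E` is computed by a totally tame `V` of the
right size. If `dim B = 2` then `V` is a vector and `A * V` is handled by induction on `A`;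
if `dim B ≥ 3` then `dim A, dim V ≥ 2`, so both are at most `dim (A * V) = dim A + dim V - 2`
and `A * V` is tame. Contraction on the left is symmetric, using `E * (A * B) ≃ (E * A) * B`. -/

namespace TC

section Tensor

variable {R : Type}

theorem Idx.cast_cons {x : ℕ} {xs ys : List ℕ} (h : xs = ys) (h' : x :: xs = x :: ys)
    (i : Fin x) (e : Idx xs) :
    Idx.cast h' ((i, e) : Idx (x :: xs)) = (i, Idx.cast h e) := by
  subst h; rfl

theorem Idx.cast_app_left {xs xs' ys : List ℕ} (hx : xs = xs') (h : xs ++ ys = xs' ++ ys)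
    (u : Idx xs) (w : Idx ys) :
    Idx.cast h (Idx.app xs u w) = Idx.app xs' (Idx.cast hx u) w := by
  subst hx; rfl

theorem Idx.split_cast_left {xs xs' ys : List ℕ} (hx : xs = xs') (h : xs ++ ys = xs' ++ ys)
    (e : Idx (xs ++ ys)) :
    Idx.split xs' (Idx.cast h e) = (Idx.cast hx (Idx.split xs e).1, (Idx.split xs e).2) := by
  subst hx; rfl

@[simp] theorem Idx.split_app (xs : List ℕ) {ys : List ℕ} (u : Idx xs) (w : Idx ys) :
    Idx.split xs (Idx.app xs u w) = (u, w) := by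
  induction xs with
  | nil => rfl
  | cons x xs ih => simp [Idx.split, Idx.app, ih u.2]; rfl

theorem Idx.app_split (xs : List ℕ) {ys : List ℕ} (e : Idx (xs ++ ys)) :
    Idx.app xs (Idx.split xs e).1 (Idx.split xs e).2 = e := by
  induction xs with
  | nil => rfl
  | cons x xs ih => exact congrArg (Prod.mk e.1) (ih e.2)

theorem Idx.cast_app_assoc {xs ys zs : List ℕ} (h : (xs ++ ys) ++ zs = xs ++ (ys ++ zs))
    (u : Idx xs) (s : Idx ys) (w : Idx zs) :
    Idx.cast h (Idx.app (xs ++ ys) (Idx.app xs u s) w) = Idx.app xs u (Idx.app ys s w) := by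
  induction xs with
  | nil => rfl
  | cons x xs ih =>
      exact (Idx.cast_cons (List.append_assoc xs ys zs) h u.1 _).trans
        (congrArg (Prod.mk u.1) (ih _ u.2))

theorem Idx.forall_app_app {xs ys zs : List ℕ} {P : Idx ((xs ++ ys) ++ zs) → Prop}
    (H : ∀ u s w, P (Idx.app (xs ++ ys) (Idx.app xs u s) w)) (e : Idx ((xs ++ ys) ++ zs)) :
    P e := by
  rw [← Idx.app_split (xs ++ ys) e, ← Idx.app_split xs (Idx.split (xs ++ ys) e).1]
  exact H _ _ _

theorem Tens.mk_eq_mk {l l' : List ℕ} (h : l = l') (f : Idx l → R) (g : Idx l' → R)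
    (hfg : ∀ e, f e = g (Idx.cast h e)) : (⟨l, f⟩ : Tens R) = ⟨l', g⟩ := by
  subst h; exact congrArg _ (funext hfg)

theorem Tens.eq_mk_cast (T : Tens R) {l : List ℕ} (h : T.order = l) :
    T = ⟨l, fun e => T.entry (Idx.cast h.symm e)⟩ := by
  cases T; subst h; rfl

theorem Tens.Compatible.exists_eq_cons {T G : Tens R} (h : T.Compatible G) :
    ∃ c, T.order.getLast? = some c ∧ G.order = c :: G.order.tail := by
  obtain ⟨-, hG, hlast⟩ := h
  obtain ⟨c, t, hct⟩ := List.exists_cons_of_ne_nil hG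
  exact ⟨c, by rw [hlast, hct]; rfl, by rw [hct]; rfl⟩

variable [CommSemiring R]

theorem Tens.contr_eq_of_getLast? (T G : Tens R) (c : ℕ) (ys : List ℕ)
    (hT : T.order.getLast? = some c) (hG : G.order = c :: ys) :
    T.contr G = ⟨T.order.dropLast ++ ys, fun e =>
      ∑ i : Fin c,
        T.entry (Idx.cast (List.dropLast_append_getLast? c hT)
          (Idx.app T.order.dropLast (Idx.split T.order.dropLast e).1 ((i, PUnit.unit) : Idx [c]))) *
        G.entry (Idx.cast hG.symm ((i, (Idx.split T.order.dropLast e).2) : Idx (c :: ys)))⟩ := by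
  unfold Tens.contr
  split
  · rename_i c' c'' ms hT' hG'
    rw [hT] at hT'
    cases hT'
    rw [hG] at hG'
    cases hG'
    rw [dif_pos rfl]
  · rename_i hne
    exact (hne c c ys hT hG).elim

theorem Tens.mk_contr_mk (as : List ℕ) (c : ℕ) (ys : List ℕ)
    (a : Idx (as ++ [c]) → R) (b : Idx (c :: ys) → R) :
    Tens.contr ⟨as ++ [c], a⟩ ⟨c :: ys, b⟩ =
      ⟨as ++ ys, fun e => ∑ i : Fin c,
        a (Idx.app as (Idx.split as e).1 ((i, PUnit.unit) : Idx [c])) *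
        b (i, (Idx.split as e).2)⟩ := by
  have hD : (as ++ [c]).dropLast = as := by simp
  rw [Tens.contr_eq_of_getLast? _ _ c ys (by simp) rfl]
  refine Tens.mk_eq_mk (by rw [hD]) _ _ fun e => ?_
  rw [Idx.split_cast_left hD]
  refine Finset.sum_congr rfl fun i _ => ?_
  exact congrArg (· * _) (congrArg a (Idx.cast_app_left hD _ _ _))

theorem Tens.mk_contr_mk_assoc (as bs cs : List ℕ) (c d : ℕ) (a : Idx (as ++ [c]) → R)
    (b : Idx (c :: (bs ++ [d])) → R) (g : Idx (d :: cs) → R) :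
    Tens.contr (Tens.contr ⟨as ++ [c], a⟩ ⟨c :: (bs ++ [d]), b⟩) ⟨d :: cs, g⟩ =
      Tens.contr ⟨as ++ [c], a⟩ (Tens.contr ⟨(c :: bs) ++ [d], b⟩ ⟨d :: cs, g⟩) := by
  have hab := Tens.mk_contr_mk as c (bs ++ [d]) a b
  rw [Tens.eq_mk_cast (Tens.mk (as ++ (bs ++ [d])) _) (List.append_assoc as bs [d]).symm] at hab
  rw [hab, Tens.mk_contr_mk (c :: bs) d cs b g]
  rw [Tens.mk_contr_mk (as ++ bs) d cs]
  erw [Tens.mk_contr_mk as c (bs ++ cs)]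
  refine Tens.mk_eq_mk (List.append_assoc as bs cs) _ _ (Idx.forall_app_app fun u s w => ?_)
  -- the instance of `Idx.cast_app_assoc` with `(j, PUnit.unit)` typed as `Idx [d]`,
  -- which `simp` does not find by unification
  have key (j : Fin d) : Idx.cast (List.append_assoc as bs [d])
      (@Idx.app (as ++ bs) [d] (Idx.app as u s) (@Prod.mk (Fin d) (Idx []) j PUnit.unit)) =
      Idx.app as u (@Idx.app bs [d] s (@Prod.mk (Fin d) (Idx []) j PUnit.unit)) :=
    Idx.cast_app_assoc _ u s _
  simp only [Idx.cast_app_assoc, Idx.split_app, Idx.split, Idx.app, key]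
  simp only [Finset.mul_sum, Finset.sum_mul, mul_assoc]
  exact Finset.sum_comm

theorem Tens.contr_assoc {A B C : Tens R} (hAB : A.Compatible B) (hBC : B.Compatible C)
    (hB : 2 ≤ B.order.length) : (A.contr B).contr C = A.contr (B.contr C) := by
  obtain ⟨c, hA, hBc⟩ := hAB.exists_eq_cons
  obtain ⟨d, hBd, hC⟩ := hBC.exists_eq_cons
  obtain ⟨b₀, bs, hBo⟩ : ∃ b₀ bs, B.order = b₀ :: bs :=
    List.exists_cons_of_ne_nil hAB.2.1
  have hb₀ : b₀ = c := by simpa [hBo] using hBc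
  have hbs : bs = bs.dropLast ++ [d] := by
    refine (List.dropLast_append_getLast? d ?_).symm
    obtain ⟨b₁, bs', rfl⟩ := List.exists_cons_of_ne_nil
      (List.ne_nil_of_length_pos (by simp [hBo] at hB; omega) : bs ≠ [])
    simpa [hBo] using hBd
  rw [Tens.eq_mk_cast A (List.dropLast_append_getLast? c hA).symm,
    Tens.eq_mk_cast B (show B.order = c :: (bs.dropLast ++ [d]) by rw [hBo, hb₀, ← hbs]),
    Tens.eq_mk_cast C hC]
  exact Tens.mk_contr_mk_assoc _ _ _ c d _ _ _

theorem Tens.order_contr {T G : Tens R} (h : T.Compatible G) :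
    (T.contr G).order = T.order.dropLast ++ G.order.tail := by
  obtain ⟨c, hT, hG⟩ := h.exists_eq_cons
  rw [Tens.contr_eq_of_getLast? T G c _ hT hG]

theorem Tens.dim_contr {T G : Tens R} (h : T.Compatible G) :
    (T.contr G).dim + 2 = T.dim + G.dim := by
  have hT := List.length_pos_iff.mpr h.1
  have hG := List.length_pos_iff.mpr h.2.1
  simp only [Tens.dim, Tens.order_contr h, List.length_append, List.length_dropLast,
    List.length_tail]
  omega

theorem Tens.compatible_contr_left_iff {A B C : Tens R} (hAB : A.Compatible B)
    (hB : 2 ≤ B.order.length) : (A.contr B).Compatible C ↔ B.Compatible C := by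
  have htail : B.order.tail ≠ [] := List.ne_nil_of_length_pos (by simp; omega)
  have hlast : (A.contr B).order.getLast? = B.order.getLast? := by
    rw [Tens.order_contr hAB, List.getLast?_append_of_ne_nil _ htail, List.getLast?_tail,
      if_neg (by omega)]
  have hne : (A.contr B).order ≠ [] := by simp [Tens.order_contr hAB, htail]
  rw [Tens.Compatible, Tens.Compatible, hlast]
  exact ⟨fun ⟨_, hC, h⟩ => ⟨hAB.2.1, hC, h⟩, fun ⟨_, hC, h⟩ => ⟨hne, hC, h⟩⟩

theorem Tens.compatible_contr_right_iff {A B C : Tens R} (hBC : B.Compatible C)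
    (hB : 2 ≤ B.order.length) : A.Compatible (B.contr C) ↔ A.Compatible B := by
  have hinit : B.order.dropLast ≠ [] := List.ne_nil_of_length_pos (by simp; omega)
  have hhead : (B.contr C).order.head? = B.order.head? := by
    rw [Tens.order_contr hBC, List.head?_append_of_ne_nil _ hinit, List.head?_dropLast,
      if_pos (by omega)]
  have hne : (B.contr C).order ≠ [] := by simp [Tens.order_contr hBC, hinit]
  rw [Tens.Compatible, Tens.Compatible, hhead]
  exact ⟨fun ⟨hA, _, h⟩ => ⟨hA, hBC.1, h⟩, fun ⟨hA, _, h⟩ => ⟨hA, hne, h⟩⟩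

end Tensor

section Formula

variable {K : Type} [Field K]

theorem SForm.maxdim_contr (F G : SForm K) :
    (SForm.contr F G).maxdim = max (SForm.contr F G).dim (max F.maxdim G.maxdim) := rfl

theorem SForm.dim_contr {F G : SForm K} (h : F.eval.Compatible G.eval) :
    (SForm.contr F G).dim + 2 = F.dim + G.dim :=
  Tens.dim_contr h

theorem SForm.dim_le_maxdim (F : SForm K) : F.dim ≤ F.maxdim := by
  cases F with
  | input T => exact le_rfl
  | contr F G => exact le_max_left _ _

theorem SForm.TotallyTame.tame {F : SForm K} (h : F.TotallyTame) : F.Tame := by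
  cases F with
  | input T => exact h
  | contr F G => exact h.1

theorem SForm.tame_contr_iff {F G : SForm K} :
    (SForm.contr F G).Tame ↔
      max F.maxdim G.maxdim ≤ max (SForm.contr F G).dim (max F.inputDim G.inputDim) := by
  rw [SForm.Tame, SForm.maxdim_contr]
  exact ⟨fun h => le_trans (le_max_right _ _) h, fun h => max_le (le_max_left _ _) h⟩

theorem SForm.one_le_inputDim {F : SForm K} (hF : F.WF) (hne : F.eval.order ≠ []) :
    1 ≤ F.inputDim := by
  induction F with
  | input T => exact List.length_pos_iff.mpr hne
  | contr A B ihA _ => exact le_max_of_le_left (ihA hF.1 hF.2.2.1)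

theorem SForm.maxdim_input_le (T : Tens (Entry K)) :
    (SForm.input T : SForm K).maxdim ≤ max ((SForm.input T : SForm K).dim - 1)
      (SForm.input T : SForm K).inputDim :=
  le_max_right _ _

theorem SForm.two_le_dim_of_lt_maxdim {A B : SForm K} (hAB : A.eval.Compatible B.eval)
    (ht : (SForm.contr A B).Tame)
    (hm : max ((SForm.contr A B).dim - 1) (SForm.contr A B).inputDim <
      (SForm.contr A B).maxdim) :
    2 ≤ A.dim ∧ 2 ≤ B.dim := by
  have hdim := SForm.dim_contr hAB
  have hAd := A.dim_le_maxdim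
  have hBd := B.dim_le_maxdim
  rw [SForm.Tame, SForm.maxdim_contr] at ht
  rw [SForm.maxdim_contr] at hm
  simp only [SForm.inputDim] at ht hm
  omega

theorem SForm.totallyTame_contr_vector_right {F E : SForm K} (hFt : F.TotallyTame)
    (hE : E.WF) (hEt : E.TotallyTame) (hE1 : E.dim = 1) (hFE : F.eval.Compatible E.eval)
    (hm : F.maxdim ≤ max (F.dim - 1) F.inputDim) : (SForm.contr F E).TotallyTame := by
  refine ⟨SForm.tame_contr_iff.mpr ?_, hFt, hEt⟩
  have hdim := SForm.dim_contr hFE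
  have hEm : E.maxdim ≤ max E.dim E.inputDim := hEt.tame
  have hEp := SForm.one_le_inputDim hE hFE.2.1
  omega

theorem SForm.totallyTame_contr_vector_left {F E : SForm K} (hFt : F.TotallyTame)
    (hE : E.WF) (hEt : E.TotallyTame) (hE1 : E.dim = 1) (hEF : E.eval.Compatible F.eval)
    (hm : F.maxdim ≤ max (F.dim - 1) F.inputDim) : (SForm.contr E F).TotallyTame := by
  refine ⟨SForm.tame_contr_iff.mpr ?_, hEt, hFt⟩
  have hdim := SForm.dim_contr hEF
  have hEm : E.maxdim ≤ max E.dim E.inputDim := hEt.tame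
  have hEp := SForm.one_le_inputDim hE hEF.1
  omega

theorem SForm.exists_totallyTame_contr_vector_right (F : SForm K) {E : SForm K} (hF : F.WF)
    (hFt : F.TotallyTame) (hE : E.WF) (hEt : E.TotallyTame) (hE1 : E.dim = 1)
    (hFE : F.eval.Compatible E.eval) :
    ∃ G : SForm K, G.WF ∧ G.TotallyTame ∧ G.size = F.size + E.size + 1 ∧
      G.eval = F.eval.contr E.eval ∧ G.inputDim = max F.inputDim E.inputDim := by
  induction F generalizing E with
  | input T =>
    exact ⟨SForm.contr _ E, ⟨hF, hE, hFE⟩,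
      SForm.totallyTame_contr_vector_right hFt hE hEt hE1 hFE (SForm.maxdim_input_le T),
      rfl, rfl, rfl⟩
  | contr A B ihA ihB =>
    rcases le_or_gt (SForm.contr A B).maxdim
      (max ((SForm.contr A B).dim - 1) (SForm.contr A B).inputDim) with hm | hm
    · exact ⟨SForm.contr _ E, ⟨hF, hE, hFE⟩, 
        SForm.totallyTame_contr_vector_right hFt hE hEt hE1 hFE hm, rfl, rfl, rfl⟩
    obtain ⟨hA, hB, hAB⟩ := hF
    obtain ⟨hFtame, hAt, hBt⟩ := hFt
    obtain ⟨hA2, hB2⟩ := SForm.two_le_dim_of_lt_maxdim hAB hFtame hm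
    have hBE : B.eval.Compatible E.eval := (Tens.compatible_contr_left_iff hAB hB2).mp hFE
    obtain ⟨V, hV, hVt, hVsize, hVeval, hVp⟩ := ihB hB hBt hE hEt hE1 hBE
    have hVdim : V.dim + 2 = B.dim + E.dim := by
      rw [SForm.dim, hVeval]; exact Tens.dim_contr hBE
    have hAV : A.eval.Compatible V.eval := by
      rw [hVeval]; exact (Tens.compatible_contr_right_iff hBE hB2).mpr hAB
    have hassoc : (SForm.contr A B).eval.contr E.eval = A.eval.contr V.eval := by
      rw [hVeval]; exact Tens.contr_assoc hAB hBE hB2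
    simp only [SForm.size, SForm.inputDim, hassoc]
    rcases Nat.lt_or_eq_of_le hB2 with hB3 | hB2
    · have hAm : A.maxdim ≤ max A.dim A.inputDim := hAt.tame
      have hVm : V.maxdim ≤ max V.dim V.inputDim := hVt.tame
      have hAVdim := SForm.dim_contr hAV
      refine ⟨SForm.contr A V, ⟨hA, hV, hAV⟩, ⟨SForm.tame_contr_iff.mpr ?_, hAt, hVt⟩,
        ?_, rfl, ?_⟩
      · omega
      · simp only [SForm.size]; omega
      · simp only [SForm.inputDim]; omega
    · obtain ⟨G, hG, hGt, hGsize, hGeval, hGp⟩ := ihA hA hAt hV hVt (by omega) hAV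
      exact ⟨G, hG, hGt, by omega, hGeval, by omega⟩

theorem SForm.exists_totallyTame_contr_vector_left (F : SForm K) {E : SForm K} (hF : F.WF)
    (hFt : F.TotallyTame) (hE : E.WF) (hEt : E.TotallyTame) (hE1 : E.dim = 1)
    (hEF : E.eval.Compatible F.eval) :
    ∃ G : SForm K, G.WF ∧ G.TotallyTame ∧ G.size = F.size + E.size + 1 ∧
      G.eval = E.eval.contr F.eval ∧ G.inputDim = max F.inputDim E.inputDim := by
  induction F generalizing E with
  | input T =>
    exact ⟨SForm.contr E _, ⟨hE, hF, hEF⟩, SForm.totallyTame_contr_vector_left hFt hE hEt hE1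
      hEF (SForm.maxdim_input_le T), by simp only [SForm.size]; omega, rfl, max_comm _ _⟩
  | contr A B ihA ihB =>
    rcases le_or_gt (SForm.contr A B).maxdim
      (max ((SForm.contr A B).dim - 1) (SForm.contr A B).inputDim) with hm | hm
    · exact ⟨SForm.contr E _, ⟨hE, hF, hEF⟩,
        SForm.totallyTame_contr_vector_left hFt hE hEt hE1 hEF hm,
        by simp only [SForm.size]; omega, rfl, max_comm _ _⟩
    obtain ⟨hA, hB, hAB⟩ := hF
    obtain ⟨hFtame, hAt, hBt⟩ := hFt
    obtain ⟨hA2, hB2⟩ := SForm.two_le_dim_of_lt_maxdim hAB hFtame hm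
    have hEA : E.eval.Compatible A.eval := (Tens.compatible_contr_right_iff hAB hA2).mp hEF
    obtain ⟨V, hV, hVt, hVsize, hVeval, hVp⟩ := ihA hA hAt hE hEt hE1 hEA
    have hVdim : V.dim + 2 = E.dim + A.dim := by
      rw [SForm.dim, hVeval]; exact Tens.dim_contr hEA
    have hVB : V.eval.Compatible B.eval := by
      rw [hVeval]; exact (Tens.compatible_contr_left_iff hEA hA2).mpr hAB
    have hassoc : E.eval.contr (SForm.contr A B).eval = V.eval.contr B.eval := by
      rw [hVeval]; exact (Tens.contr_assoc hEA hAB hA2).symm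
    simp only [SForm.size, SForm.inputDim, hassoc]
    rcases Nat.lt_or_eq_of_le hA2 with hA3 | hA2
    · have hBm : B.maxdim ≤ max B.dim B.inputDim := hBt.tame
      have hVm : V.maxdim ≤ max V.dim V.inputDim := hVt.tame
      have hVBdim := SForm.dim_contr hVB
      refine ⟨SForm.contr V B, ⟨hV, hB, hVB⟩, ⟨SForm.tame_contr_iff.mpr ?_, hVt, hBt⟩,
        ?_, rfl, ?_⟩
      · omega
      · simp only [SForm.size]; omega
      · simp only [SForm.inputDim]; omega
    · obtain ⟨G, hG, hGt, hGsize, hGeval, hGp⟩ := ihB hB hBt hV hVt (by omega) hVB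
      exact ⟨G, hG, hGt, by omega, hGeval, by omega⟩

end Formula

end TC

open TC

theorem totally_tame_contract_vector_general {K : Type} [Field K] (F E : SForm K)
    (hFwf : F.WF) (hEwf : E.WF) (hFt : F.TotallyTame) (hEt : E.TotallyTame)
    (hEdim : E.dim = 1) :
    (F.eval.Compatible E.eval →
      ∃ Gr : SForm K, Gr.WF ∧ Gr.TotallyTame ∧ Gr.size = F.size + E.size + 1 ∧
        Gr.eval = F.eval.contr E.eval) ∧
    (E.eval.Compatible F.eval →
      ∃ Gl : SForm K, Gl.WF ∧ Gl.TotallyTame ∧ Gl.size = F.size + E.size + 1 ∧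
        Gl.eval = E.eval.contr F.eval) := by
  refine ⟨fun hFE => ?_, fun hEF => ?_⟩
  · obtain ⟨G, hG, hGt, hGsize, hGeval, -⟩ :=
      F.exists_totallyTame_contr_vector_right hFwf hFt hEwf hEt hEdim hFE
    exact ⟨G, hG, hGt, hGsize, hGeval⟩
  · obtain ⟨G, hG, hGt, hGsize, hGeval, -⟩ :=
      F.exists_totallyTame_contr_vector_left hFwf hFt hEwf hEt hEdim hEF
    exact ⟨G, hG, hGt, hGsize, hGeval⟩

/-- contracting a totally tame formula with a totally tame vector of
input dimension at most `p` on either side can be done by a totally tame formula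
of size `|F| + |E| + 1`. -/
theorem totally_tame_contract_vector {K : Type} [Field K] (F E : SForm K)
    (hFwf : F.WF) (hEwf : E.WF) (hFt : F.TotallyTame) (hEt : E.TotallyTame)
    (hEdim : E.dim = 1) (hEp : E.inputDim ≤ F.inputDim) :
    (F.eval.Compatible E.eval →
      ∃ Gr : SForm K, Gr.WF ∧ Gr.TotallyTame ∧ Gr.size = F.size + E.size + 1 ∧
        Gr.eval = F.eval.contr E.eval) ∧
    (E.eval.Compatible F.eval →
      ∃ Gl : SForm K, Gl.WF ∧ Gl.TotallyTame ∧ Gl.size = F.size + E.size + 1 ∧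
        Gl.eval = E.eval.contr F.eval) :=
  totally_tame_contract_vector_general F E hFwf hEwf hFt hEt hEdim
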